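/- Assume β·(α+γ) < 4, let p_t denote the unique fixed point in [0,1] of the logit map L_t, and set t̄ = κ − (α − γ)/2. If t < t̄ then p_t > 1/2, and if t > t̄ then p_t < 1/2. -/

import Mathlib

/-!
Writing `u = p - 1/2`, the fixed-point equation becomes `u = σ(c u + d) - 1/2` for the logistic
sigmoid `σ`, with `c = β(α+γ)` and `d = β(t̄ - t)`. Since `σ' = σ(1 - σ) ≤ 1/4` and `c < 4`, the map
`u ↦ σ(c u + d) - 1/2 - u` is strictly decreasing; it vanishes at the fixed point and has the sign
of `d` at `u = 0`, so `u` has the sign of `d`.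
-/

noncomputable def logitMap (α γ κ β t p : ℝ) : ℝ :=
  1 / (1 + Real.exp (β * (α - κ - p * (α + γ) + t)))

open Real

lemma Real.sigmoid_mul_one_sub_sigmoid_le (x : ℝ) : sigmoid x * (1 - sigmoid x) ≤ 1 / 4 := by
  nlinarith [sq_nonneg (sigmoid x - 1 / 2)]

lemma Real.sigmoid_mul_one_sub_sigmoid_pos (x : ℝ) : 0 < sigmoid x * (1 - sigmoid x) :=
  mul_pos (sigmoid_pos x) (sub_pos.mpr (sigmoid_lt_one x))

lemma Real.strictAnti_sigmoid_affine_sub {c : ℝ} (hc : c < 4) (d : ℝ) :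
    StrictAnti fun u => sigmoid (c * u + d) - u := by
  refine strictAnti_of_hasDerivAt_neg
    (f' := fun u => sigmoid (c * u + d) * (1 - sigmoid (c * u + d)) * (c * 1) - 1)
    (fun u => ?_) fun u => ?_
  · exact ((hasDerivAt_sigmoid _).comp u (((hasDerivAt_id u).const_mul c).add_const d)).sub
      (hasDerivAt_id u)
  · have hle := sigmoid_mul_one_sub_sigmoid_le (c * u + d)
    have hpos := sigmoid_mul_one_sub_sigmoid_pos (c * u + d)
    nlinarith

lemma Real.pos_of_sigmoid_affine_sub_half_eq {c d u : ℝ} (hc : c < 4)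
    (hu : sigmoid (c * u + d) - 1 / 2 = u) (hd : 0 < d) : 0 < u := by
  have hhalf : sigmoid 0 < sigmoid d := sigmoid_lt hd
  rw [sigmoid_zero] at hhalf
  refine (strictAnti_sigmoid_affine_sub hc d).lt_iff_gt.mp ?_
  simp only [mul_zero, zero_add, sub_zero]
  linarith

lemma Real.neg_of_sigmoid_affine_sub_half_eq {c d u : ℝ} (hc : c < 4)
    (hu : sigmoid (c * u + d) - 1 / 2 = u) (hd : d < 0) : u < 0 := by
  have hneg : sigmoid (c * -u + -d) - 1 / 2 = -u := by
    rw [show c * -u + -d = -(c * u + d) by ring, sigmoid_neg]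
    linarith
  exact neg_pos.mp (pos_of_sigmoid_affine_sub_half_eq hc hneg (neg_pos.mpr hd))

lemma logitMap_eq_sigmoid (α γ κ β t p : ℝ) :
    logitMap α γ κ β t p =
      sigmoid (β * (α + γ) * (p - 1 / 2) + β * (κ - (α - γ) / 2 - t)) := by
  rw [logitMap, sigmoid_def, one_div]
  congr 3
  ring

theorem stmt_10_general (α γ κ β : ℝ) (hβ : 0 < β)
    (hcontr : β * (α + γ) < 4)
    (t p : ℝ) (hfix : logitMap α γ κ β t p = p) :
    (t < κ - (α - γ) / 2 → 1 / 2 < p) ∧ (κ - (α - γ) / 2 < t → p < 1 / 2) := by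
  have hu : sigmoid (β * (α + γ) * (p - 1 / 2) + β * (κ - (α - γ) / 2 - t)) - 1 / 2 =
      p - 1 / 2 := by
    rw [← logitMap_eq_sigmoid, hfix]
  constructor
  · intro ht
    have hpos := pos_of_sigmoid_affine_sub_half_eq hcontr hu (mul_pos hβ (sub_pos.mpr ht))
    linarith
  · intro ht
    have hneg := neg_of_sigmoid_affine_sub_half_eq hcontr hu (mul_neg_of_pos_of_neg hβ (sub_neg.mpr ht))
    linarith

/-- Under the contraction condition, with `t̄ = κ − (α − γ)/2` and `p_t` the unique
fixed point of `L_t` in `[0,1]`: if `t < t̄` then `p_t > 1/2`, and if `t > t̄` then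
`p_t < 1/2`. -/
theorem stmt_10 (α γ κ β : ℝ) (hα : 0 < α) (hγ : 0 < γ) (hκ : 0 ≤ κ) (hβ : 0 < β)
    (hcontr : β * (α + γ) < 4)
    (t p : ℝ) (hp : p ∈ Set.Icc (0 : ℝ) 1) (hfix : logitMap α γ κ β t p = p) :
    (t < κ - (α - γ) / 2 → 1 / 2 < p) ∧ (κ - (α - γ) / 2 < t → p < 1 / 2) :=
  stmt_10_general α γ κ β hβ hcontr t p hfix
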